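/- arXiv:2508.05108 — 4 statements merged into one kernel-verified Lean document; each statement's English description precedes it below -/
import Mathlib

section
/- (Variance decomposition in the proof of Theorem 3.) Define A(D) = (1/n)·Σ_{i=1}^{n} L(xᵢ,xᵢ') and B(D) = (1/n)·Σ_{i=1}^{n} L(xᵢ',xᵢ) on ((X×X)^n, ν), and set μ₁ = ∫ A² dν, μ₂ = ∫ A·B dν. Then (i) ∫ A² dν = ∫ B² dν; (ii) for every λ ∈ [0,1], Var_ν(λ·A + (1−λ)·B) = 2(μ₁ − μ₂)·(λ − 1/2)² + (μ₁ + μ₂)/2 − R²; and (iii) 2μ₁ − 2μ₂ = ∫ (A − B)² dν ≥ 0. -/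
/-!
Swapping the two points of every pair preserves `ν` and carries `A` to `B`, so `A` and `B` have
the same mean and the same second moment; (i) is the second of these facts, (iii) is the expansion
of the square, and (ii) follows from the bilinearity of variance and covariance once both means
are known to equal `R`. That last fact is the unbiasedness of `L`: its two weights are affine in
the partner point, and integrating the partner out turns the weight of `ℓ₊(x)` into `η(x)` and
the weight of `ℓ₋(x')` into `1 - η(x')`.
-/

open MeasureTheory ProbabilityTheory Set Function

section Moments

variable {Ω : Type*} [MeasurableSpace Ω] {P : Measure Ω} {A B : Ω → ℝ}

lemma integral_sub_sq_eq (hA : MemLp A 2 P) (hB : MemLp B 2 P) :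
    ∫ ω, (A ω - B ω) ^ 2 ∂P = ∫ ω, A ω ^ 2 ∂P + ∫ ω, B ω ^ 2 ∂P - 2 * ∫ ω, A ω * B ω ∂P := by
  have hsum : Integrable (fun ω => A ω ^ 2 + B ω ^ 2) P := hA.integrable_sq.add hB.integrable_sq
  have hprod : Integrable (fun ω => 2 * (A ω * B ω)) P := (hA.integrable_mul hB).const_mul 2
  calc ∫ ω, (A ω - B ω) ^ 2 ∂P = ∫ ω, (A ω ^ 2 + B ω ^ 2 - 2 * (A ω * B ω)) ∂P := by
        congr with ω; ring
    _ = _ := by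
      rw [integral_sub hsum hprod, integral_add hA.integrable_sq hB.integrable_sq,
        integral_const_mul]

lemma variance_mul_add_one_sub_mul_of_moments_eq [IsProbabilityMeasure P] (hA : MemLp A 2 P)
    (hB : MemLp B 2 P) (hmean : ∫ ω, B ω ∂P = ∫ ω, A ω ∂P)
    (hsq : ∫ ω, B ω ^ 2 ∂P = ∫ ω, A ω ^ 2 ∂P) (lam : ℝ) :
    variance (fun ω => lam * A ω + (1 - lam) * B ω) P
      = 2 * (∫ ω, A ω ^ 2 ∂P - ∫ ω, A ω * B ω ∂P) * (lam - 1 / 2) ^ 2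
        + (∫ ω, A ω ^ 2 ∂P + ∫ ω, A ω * B ω ∂P) / 2 - (∫ ω, A ω ∂P) ^ 2 := by
  rw [variance_fun_add (hA.const_mul lam) (hB.const_mul (1 - lam)), variance_const_mul,
    variance_const_mul, covariance_const_mul_left, covariance_const_mul_right,
    variance_eq_sub hA, variance_eq_sub hB, covariance_eq_sub hA hB]
  simp only [Pi.pow_apply, Pi.mul_apply, hmean, hsq]
  ring

end Moments

section SampleMean

variable {Y : Type*} [MeasurableSpace Y] {P : Measure Y} [IsProbabilityMeasure P] {f : Y → ℝ}
  {n : ℕ}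

lemma memLp_sampleMean (p : ENNReal) (hf : MemLp f p P) :
    MemLp (fun D : Fin n → Y => 1 / (n : ℝ) * ∑ i, f (D i)) p (Measure.pi fun _ => P) :=
  (memLp_finsetSum _ fun i _ =>
    hf.comp_measurePreserving (measurePreserving_eval (fun _ => P) i)).const_mul _

lemma integral_sampleMean (hf : Integrable f P) (hn : n ≠ 0) :
    ∫ D : Fin n → Y, 1 / (n : ℝ) * ∑ i, f (D i) ∂(Measure.pi fun _ => P) = ∫ y, f y ∂P := by
  rw [integral_const_mul, integral_finsetSum _ fun i _ => integrable_comp_eval hf]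
  simp only [integral_comp_eval (μ := fun _ : Fin n => P) hf.aestronglyMeasurable,
    Finset.sum_const, Finset.card_univ, Fintype.card_fin, nsmul_eq_mul]
  field_simp

end SampleMean

lemma measurePreserving_piCongrRight_prodComm {ι X Y : Type*} [Fintype ι] [MeasurableSpace X]
    [MeasurableSpace Y] (μ : Measure X) (ν : Measure Y) [SigmaFinite μ] [SigmaFinite ν] :
    MeasurePreserving (MeasurableEquiv.piCongrRight fun _ : ι => MeasurableEquiv.prodComm)
      (Measure.pi fun _ => μ.prod ν) (Measure.pi fun _ => ν.prod μ) :=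
  measurePreserving_pi _ _ fun _ => Measure.measurePreserving_swap

section PairLoss

variable {X : Type*} {η : X → ℝ}

/-- `2p(p - c(x,x')) + q - s(x,x')`: in `L` this weighs `ℓ₊(x)` with `(p, q) = (π₊, π₋)` and
`ℓ₋(x')` with `(p, q) = (π₋, π₊)`. -/
def lossWeight (p q : ℝ) (η : X → ℝ) (x x' : X) : ℝ :=
  2 * p * (p - (η x' - η x)) + q - (η x * η x' + (1 - η x) * (1 - η x'))

lemma abs_lossWeight_le {p q : ℝ} (hp : p ∈ Icc 0 1) (hq : q ∈ Icc 0 1)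
    (hη : ∀ x, η x ∈ Icc 0 1) (x x' : X) : |lossWeight p q η x x'| ≤ 6 := by
  obtain ⟨⟨hp0, hp1⟩, ⟨hq0, hq1⟩⟩ := And.intro hp hq
  obtain ⟨⟨h0, h1⟩, ⟨h0', h1'⟩⟩ := And.intro (hη x) (hη x')
  rw [lossWeight, abs_le]
  constructor <;> nlinarith [mul_nonneg h0 h0', mul_nonneg (sub_nonneg.2 h1) (sub_nonneg.2 h1'),
    mul_nonneg hp0 (sub_nonneg.2 h1), mul_nonneg hp0 h0', mul_nonneg hp0 h0,
    mul_nonneg hp0 (sub_nonneg.2 h1')]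

variable [MeasurableSpace X] {μ : Measure X} {ℓp ℓm : X → ℝ}

noncomputable def pairLoss (μ : Measure X) (η ℓp ℓm : X → ℝ) (x x' : X) : ℝ :=
  lossWeight (∫ y, η y ∂μ) (1 - ∫ y, η y ∂μ) η x x' * ℓp x
    + lossWeight (1 - ∫ y, η y ∂μ) (∫ y, η y ∂μ) η x x' * ℓm x'

lemma measurable_lossWeight (hη : Measurable η) (p q : ℝ) :
    Measurable (uncurry (lossWeight p q η)) := by
  unfold lossWeight uncurry
  fun_prop

variable [IsProbabilityMeasure μ]

lemma integral_mem_Icc_zero_one (hη : ∀ x, η x ∈ Icc 0 1) : ∫ x, η x ∂μ ∈ Icc 0 1 := by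
  by_cases hηi : Integrable η μ
  · exact ⟨integral_nonneg fun x => (hη x).1,
      (integral_mono hηi (integrable_const 1) fun x => (hη x).2).trans_eq (by simp)⟩
  · simp [integral_undef hηi]

lemma integral_const_add_mul (hη : Integrable η μ) (a b : ℝ) :
    ∫ x, (a + b * η x) ∂μ = a + b * ∫ x, η x ∂μ := by
  rw [integral_add (integrable_const a) (hη.const_mul b), integral_const_mul]
  simp

lemma integral_lossWeight_snd (hη : Integrable η μ) (x : X) :
    ∫ x', lossWeight (∫ y, η y ∂μ) (1 - ∫ y, η y ∂μ) η x x' ∂μ = η x := by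
  set π := ∫ y, η y ∂μ with hπ
  have h_affine : ∀ x', lossWeight π (1 - π) η x x'
      = (2 * π * (π + η x) + (1 - π) - (1 - η x)) + (1 - 2 * π - 2 * η x) * η x' := by
    intro x'; unfold lossWeight; ring
  simp_rw [h_affine, integral_const_add_mul hη, ← hπ]
  ring

lemma integral_lossWeight_fst (hη : Integrable η μ) (x' : X) :
    ∫ x, lossWeight (1 - ∫ y, η y ∂μ) (∫ y, η y ∂μ) η x x' ∂μ = 1 - η x' := by
  set π := ∫ y, η y ∂μ with hπ
  have h_affine : ∀ x, lossWeight (1 - π) π η x x'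
      = (2 * (1 - π) * (1 - π - η x') + π - (1 - η x')) + (3 - 2 * π - 2 * η x') * η x := by
    intro x; unfold lossWeight; ring
  simp_rw [h_affine, integral_const_add_mul hη, ← hπ]
  ring

lemma abs_pairLoss_le (hη : ∀ x, η x ∈ Icc 0 1) {C : ℝ} (hℓp : ∀ x, |ℓp x| ≤ C)
    (hℓm : ∀ x, |ℓm x| ≤ C) (x x' : X) : |pairLoss μ η ℓp ℓm x x'| ≤ 12 * C := by
  have hπ : ∫ y, η y ∂μ ∈ Icc 0 1 := integral_mem_Icc_zero_one hη
  have hπ' : 1 - ∫ y, η y ∂μ ∈ Icc 0 1 := Icc.mem_iff_one_sub_mem.1 hπ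
  calc |pairLoss μ η ℓp ℓm x x'|
      ≤ |lossWeight (∫ y, η y ∂μ) (1 - ∫ y, η y ∂μ) η x x'| * |ℓp x|
        + |lossWeight (1 - ∫ y, η y ∂μ) (∫ y, η y ∂μ) η x x'| * |ℓm x'| := by
        rw [← abs_mul, ← abs_mul]; exact abs_add_le _ _
    _ ≤ 6 * C + 6 * C := by
        gcongr
        · exact abs_lossWeight_le hπ hπ' hη x x'
        · exact hℓp x
        · exact abs_lossWeight_le hπ' hπ hη x x'
        · exact hℓm x'
    _ = 12 * C := by ring

lemma memLp_pairLoss (hηm : Measurable η) (hη : ∀ x, η x ∈ Icc 0 1) (hℓpm : Measurable ℓp)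
    (hℓmm : Measurable ℓm) {C : ℝ} (hℓp : ∀ x, |ℓp x| ≤ C) (hℓm : ∀ x, |ℓm x| ≤ C)
    (r : ENNReal) : MemLp (uncurry (pairLoss μ η ℓp ℓm)) r (μ.prod μ) := by
  have hmeas : Measurable (uncurry (pairLoss μ η ℓp ℓm)) := by
    unfold pairLoss lossWeight uncurry
    fun_prop
  exact .of_bound hmeas.aestronglyMeasurable (12 * C)
    (ae_of_all _ fun z => abs_pairLoss_le hη hℓp hℓm z.1 z.2)

lemma integral_pairLoss (hηm : Measurable η) (hη : ∀ x, η x ∈ Icc 0 1) (hℓp : Integrable ℓp μ)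
    (hℓm : Integrable ℓm μ) :
    ∫ z, uncurry (pairLoss μ η ℓp ℓm) z ∂(μ.prod μ)
      = ∫ x, (η x * ℓp x + (1 - η x) * ℓm x) ∂μ := by
  have norm_le_one : ∀ t ∈ Icc (0 : ℝ) 1, ‖t‖ ≤ 1 :=
    fun t ht => (Real.norm_of_nonneg ht.1).trans_le ht.2
  have hη_norm : ∀ x, ‖η x‖ ≤ 1 := fun x => norm_le_one _ (hη x)
  have hη_norm' : ∀ x, ‖1 - η x‖ ≤ 1 := fun x => norm_le_one _ (Icc.mem_iff_one_sub_mem.1 (hη x))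
  have hηi : Integrable η μ := .of_bound hηm.aestronglyMeasurable 1 (ae_of_all _ hη_norm)
  have hπ : ∫ y, η y ∂μ ∈ Icc 0 1 := integral_mem_Icc_zero_one hη
  have hπ' : 1 - ∫ y, η y ∂μ ∈ Icc 0 1 := Icc.mem_iff_one_sub_mem.1 hπ
  have hint₁ : Integrable (fun z : X × X =>
      lossWeight (∫ y, η y ∂μ) (1 - ∫ y, η y ∂μ) η z.1 z.2 * ℓp z.1) (μ.prod μ) :=
    (hℓp.comp_fst μ).bdd_mul (measurable_lossWeight hηm _ _).aestronglyMeasurable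
      (ae_of_all _ fun z => abs_lossWeight_le hπ hπ' hη z.1 z.2)
  have hint₂ : Integrable (fun z : X × X =>
      lossWeight (1 - ∫ y, η y ∂μ) (∫ y, η y ∂μ) η z.1 z.2 * ℓm z.2) (μ.prod μ) :=
    (hℓm.comp_snd μ).bdd_mul (measurable_lossWeight hηm _ _).aestronglyMeasurable
      (ae_of_all _ fun z => abs_lossWeight_le hπ' hπ hη z.1 z.2)
  calc ∫ z, uncurry (pairLoss μ η ℓp ℓm) z ∂(μ.prod μ)
      = ∫ z, lossWeight (∫ y, η y ∂μ) (1 - ∫ y, η y ∂μ) η z.1 z.2 * ℓp z.1 ∂(μ.prod μ)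
        + ∫ z, lossWeight (1 - ∫ y, η y ∂μ) (∫ y, η y ∂μ) η z.1 z.2 * ℓm z.2 ∂(μ.prod μ) :=
        integral_add hint₁ hint₂
    _ = ∫ x, η x * ℓp x ∂μ + ∫ x', (1 - η x') * ℓm x' ∂μ := by
        rw [integral_prod _ hint₁, integral_prod_symm _ hint₂]
        simp only [integral_mul_const, integral_lossWeight_snd hηi, integral_lossWeight_fst hηi]
    _ = ∫ x, (η x * ℓp x + (1 - η x) * ℓm x) ∂μ :=
        (integral_add (hℓp.bdd_mul hηm.aestronglyMeasurable (ae_of_all _ hη_norm))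
          (hℓm.bdd_mul (by fun_prop) (ae_of_all _ hη_norm'))).symm

end PairLoss

theorem sconfconfdiff_variance_decomposition_general
    {X : Type*} [MeasurableSpace X] (μ : Measure X) [IsProbabilityMeasure μ]
    (η : X → ℝ) (hη : Measurable η) (hη0 : ∀ x, 0 ≤ η x) (hη1 : ∀ x, η x ≤ 1)
    (πp πm : ℝ) (hπp : πp = ∫ x, η x ∂μ) (hπm : πm = 1 - πp)
    (s c : X → X → ℝ)
    (hs : ∀ x x', s x x' = η x * η x' + (1 - η x) * (1 - η x'))
    (hc : ∀ x x', c x x' = η x' - η x)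
    (Cℓ : ℝ)
    (ℓp ℓm : X → ℝ) (hℓp : Measurable ℓp) (hℓm : Measurable ℓm)
    (hℓp0 : ∀ x, 0 ≤ ℓp x) (hℓpC : ∀ x, ℓp x ≤ Cℓ)
    (hℓm0 : ∀ x, 0 ≤ ℓm x) (hℓmC : ∀ x, ℓm x ≤ Cℓ)
    (R : ℝ) (hR : R = ∫ x, (η x * ℓp x + (1 - η x) * ℓm x) ∂μ)
    (L : X → X → ℝ)
    (hL : ∀ x x', L x x' =
      (2 * πp * (πp - c x x') + πm - s x x') * ℓp x
      + (2 * πm * (πm - c x x') + πp - s x x') * ℓm x')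
    (n : ℕ) (hn : 1 ≤ n)
    (ν : Measure (Fin n → X × X)) (hν : ν = Measure.pi fun _ => μ.prod μ)
    (A B : (Fin n → X × X) → ℝ)
    (hA : ∀ D, A D = (1 / (n : ℝ)) * ∑ i, L (D i).1 (D i).2)
    (hB : ∀ D, B D = (1 / (n : ℝ)) * ∑ i, L (D i).2 (D i).1)
    (μ₁ μ₂ : ℝ) (hμ₁ : μ₁ = ∫ D, (A D) ^ 2 ∂ν) (hμ₂ : μ₂ = ∫ D, A D * B D ∂ν) :
    (∫ D, (A D) ^ 2 ∂ν = ∫ D, (B D) ^ 2 ∂ν) ∧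
    (∀ lam ∈ Set.Icc (0 : ℝ) 1,
      variance (fun D => lam * A D + (1 - lam) * B D) ν
        = 2 * (μ₁ - μ₂) * (lam - 1 / 2) ^ 2 + (μ₁ + μ₂) / 2 - R ^ 2) ∧
    (2 * μ₁ - 2 * μ₂ = ∫ D, (A D - B D) ^ 2 ∂ν ∧ 0 ≤ 2 * μ₁ - 2 * μ₂) := by
  have hη01 : ∀ x, η x ∈ Icc 0 1 := fun x => ⟨hη0 x, hη1 x⟩
  have hℓp_abs : ∀ x, |ℓp x| ≤ Cℓ := fun x => (abs_of_nonneg (hℓp0 x)).trans_le (hℓpC x)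
  have hℓm_abs : ∀ x, |ℓm x| ≤ Cℓ := fun x => (abs_of_nonneg (hℓm0 x)).trans_le (hℓmC x)
  have hL_eq : L = pairLoss μ η ℓp ℓm := by
    funext x x'
    rw [hL, hs, hc, hπm, hπp]
    rfl
  have hLp : MemLp (uncurry L) 2 (μ.prod μ) :=
    hL_eq ▸ memLp_pairLoss hη hη01 hℓp hℓm hℓp_abs hℓm_abs 2
  have hLmean : ∫ z, uncurry L z ∂(μ.prod μ) = R := by
    rw [hL_eq, hR, integral_pairLoss hη hη01
      (.of_bound hℓp.aestronglyMeasurable Cℓ (ae_of_all _ hℓp_abs))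
      (.of_bound hℓm.aestronglyMeasurable Cℓ (ae_of_all _ hℓm_abs))]
  set e := MeasurableEquiv.piCongrRight fun _ : Fin n =>
    (MeasurableEquiv.prodComm : X × X ≃ᵐ X × X)
  have he : MeasurePreserving e ν ν := hν ▸ measurePreserving_piCongrRight_prodComm μ μ
  have hA_eq : A = fun D => 1 / (n : ℝ) * ∑ i, uncurry L (D i) := funext hA
  have hB_eq : B = A ∘ e := funext fun D => by rw [hB, Function.comp_apply, hA]; rfl
  have : IsProbabilityMeasure ν := hν ▸ inferInstance
  have hAp : MemLp A 2 ν := hA_eq ▸ hν ▸ memLp_sampleMean 2 hLp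
  have hBp : MemLp B 2 ν := hB_eq ▸ hAp.comp_measurePreserving he
  have hAmean : ∫ D, A D ∂ν = R := by
    rw [hA_eq, hν, integral_sampleMean (hLp.integrable one_le_two) (by omega), hLmean]
  have hBmean : ∫ D, B D ∂ν = ∫ D, A D ∂ν := hB_eq ▸ he.integral_comp' A
  have hBsq : ∫ D, B D ^ 2 ∂ν = ∫ D, A D ^ 2 ∂ν := hB_eq ▸ he.integral_comp' (fun D => A D ^ 2)
  have hsub : 2 * μ₁ - 2 * μ₂ = ∫ D, (A D - B D) ^ 2 ∂ν := by
    rw [integral_sub_sq_eq hAp hBp, hBsq, hμ₁, hμ₂]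
    ring
  refine ⟨hBsq.symm, fun lam _ => ?_, hsub, hsub ▸ integral_nonneg fun D => sq_nonneg _⟩
  rw [hμ₁, hμ₂, variance_mul_add_one_sub_mul_of_moments_eq hAp hBp hBmean hBsq, hAmean]

/-- (Variance decomposition in the proof of Theorem 3.) -/
theorem sconfconfdiff_variance_decomposition
    {X : Type*} [MeasurableSpace X] (μ : Measure X) [IsProbabilityMeasure μ]
    (η : X → ℝ) (hη : Measurable η) (hη0 : ∀ x, 0 ≤ η x) (hη1 : ∀ x, η x ≤ 1)
    (πp πm : ℝ) (hπp : πp = ∫ x, η x ∂μ) (hπm : πm = 1 - πp)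
    (s c : X → X → ℝ)
    (hs : ∀ x x', s x x' = η x * η x' + (1 - η x) * (1 - η x'))
    (hc : ∀ x x', c x x' = η x' - η x)
    (Cℓ : ℝ) (hCℓ : 0 ≤ Cℓ)
    (ℓp ℓm : X → ℝ) (hℓp : Measurable ℓp) (hℓm : Measurable ℓm)
    (hℓp0 : ∀ x, 0 ≤ ℓp x) (hℓpC : ∀ x, ℓp x ≤ Cℓ)
    (hℓm0 : ∀ x, 0 ≤ ℓm x) (hℓmC : ∀ x, ℓm x ≤ Cℓ)
    (R : ℝ) (hR : R = ∫ x, (η x * ℓp x + (1 - η x) * ℓm x) ∂μ)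
    (L : X → X → ℝ)
    (hL : ∀ x x', L x x' =
      (2 * πp * (πp - c x x') + πm - s x x') * ℓp x
      + (2 * πm * (πm - c x x') + πp - s x x') * ℓm x')
    (n : ℕ) (hn : 1 ≤ n)
    (ν : Measure (Fin n → X × X)) (hν : ν = Measure.pi fun _ => μ.prod μ)
    (A B : (Fin n → X × X) → ℝ)
    (hA : ∀ D, A D = (1 / (n : ℝ)) * ∑ i, L (D i).1 (D i).2)
    (hB : ∀ D, B D = (1 / (n : ℝ)) * ∑ i, L (D i).2 (D i).1)
    (μ₁ μ₂ : ℝ) (hμ₁ : μ₁ = ∫ D, (A D) ^ 2 ∂ν) (hμ₂ : μ₂ = ∫ D, A D * B D ∂ν) :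
    (∫ D, (A D) ^ 2 ∂ν = ∫ D, (B D) ^ 2 ∂ν) ∧
    (∀ lam ∈ Set.Icc (0 : ℝ) 1,
      variance (fun D => lam * A D + (1 - lam) * B D) ν
        = 2 * (μ₁ - μ₂) * (lam - 1 / 2) ^ 2 + (μ₁ + μ₂) / 2 - R ^ 2) ∧
    (2 * μ₁ - 2 * μ₂ = ∫ D, (A D - B D) ^ 2 ∂ν ∧ 0 ≤ 2 * μ₁ - 2 * μ₂) :=
  sconfconfdiff_variance_decomposition_general μ η hη hη0 hη1 πp πm hπp hπm s c hs hc Cℓ ℓp ℓm hℓp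
    hℓm hℓp0 hℓpC hℓm0 hℓmC R hR L hL n hn ν hν A B hA hB μ₁ μ₂ hμ₁ hμ₂
end

section
/- (Lemma A.2, Sconf identity.) Assume π₊ > 0. Then ∫∫ s(x,x')·ℓ₊(x) d(μ⊗μ)(x,x') − (π₋/π₊)·∫∫ (1 − s(x,x'))·ℓ₊(x) d(μ⊗μ)(x,x') = ((π₊ − π₋)/π₊)·∫ η(x)·ℓ₊(x) dμ(x). (The right-hand side equals (π₊ − π₋)·E_{p(x|y=+1)}[ℓ₊(x)], since E_{p(x|y=+1)}[ℓ₊] = (1/π₊)·∫ η·ℓ₊ dμ.) -/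
/-!
Integrating out `x'` by Fubini, with `∫ η = π₊` and `∫ (1 - η) = π₋`, gives
`∫∫ s ℓ₊ = π₊ a + π₋ b` and `∫∫ (1 - s) ℓ₊ = π₋ a + π₊ b`, where `a = ∫ η ℓ₊` and
`b = ∫ (1 - η) ℓ₊`. In the combination the `b`-terms cancel, and the coefficient of `a` is
`π₊ - π₋² / π₊ = (π₊ - π₋) / π₊` because `π₊ + π₋ = 1`.
-/

open MeasureTheory

section

variable {X Y : Type*} [MeasurableSpace X] [MeasurableSpace Y]

theorem integral_prod_mul_add_mul {μ : Measure X} {ν : Measure Y} [SFinite μ] [SFinite ν]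
    {L : Type*} [RCLike L] {f₁ f₂ : X → L} {g₁ g₂ : Y → L}
    (hf₁ : Integrable f₁ μ) (hf₂ : Integrable f₂ μ) (hg₁ : Integrable g₁ ν)
    (hg₂ : Integrable g₂ ν) :
    ∫ z, (f₁ z.1 * g₁ z.2 + f₂ z.1 * g₂ z.2) ∂(μ.prod ν)
      = (∫ x, f₁ x ∂μ) * (∫ y, g₁ y ∂ν) + (∫ x, f₂ x ∂μ) * (∫ y, g₂ y ∂ν) := by
  rw [integral_add (hf₁.mul_prod hg₁) (hf₂.mul_prod hg₂), integral_prod_mul, integral_prod_mul]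

theorem integrable_of_nonneg_of_le {μ : Measure X} [IsFiniteMeasure μ] {f : X → ℝ}
    (hf : Measurable f) {C : ℝ} (h0 : ∀ x, 0 ≤ f x) (hC : ∀ x, f x ≤ C) : Integrable f μ :=
  .of_bound hf.aestronglyMeasurable C <| ae_of_all _ fun x => by
    rw [Real.norm_of_nonneg (h0 x)]
    exact hC x

theorem integral_one_sub {μ : Measure X} [IsProbabilityMeasure μ] {f : X → ℝ}
    (hf : Integrable f μ) : ∫ x, (1 - f x) ∂μ = 1 - ∫ x, f x ∂μ := by
  rw [integral_sub (integrable_const 1) hf, integral_const, probReal_univ, one_smul]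

end

theorem sconf_identity_general
    {X : Type*} [MeasurableSpace X] (μ : Measure X) [IsProbabilityMeasure μ]
    (η : X → ℝ) (hη : Measurable η) (hη0 : ∀ x, 0 ≤ η x) (hη1 : ∀ x, η x ≤ 1)
    (πp πm : ℝ) (hπp : πp = ∫ x, η x ∂μ) (hπm : πm = 1 - πp) (hπppos : 0 < πp)
    (s : X → X → ℝ)
    (hs : ∀ x x', s x x' = η x * η x' + (1 - η x) * (1 - η x'))
    (Cℓ : ℝ)
    (ℓp : X → ℝ) (hℓp : Measurable ℓp)
    (hℓp0 : ∀ x, 0 ≤ ℓp x) (hℓpC : ∀ x, ℓp x ≤ Cℓ) :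
    (∫ p : X × X, s p.1 p.2 * ℓp p.1 ∂(μ.prod μ))
      - (πm / πp) * ∫ p : X × X, (1 - s p.1 p.2) * ℓp p.1 ∂(μ.prod μ)
      = ((πp - πm) / πp) * ∫ x, η x * ℓp x ∂μ := by
  have hηi : Integrable η μ := integrable_of_nonneg_of_le hη hη0 hη1
  have h1ηi : Integrable (fun x => 1 - η x) μ := (integrable_const 1).sub hηi
  have hℓi : Integrable ℓp μ := integrable_of_nonneg_of_le hℓp hℓp0 hℓpC
  have hηℓi : Integrable (fun x => η x * ℓp x) μ :=
    hℓi.bdd_mul hη.aestronglyMeasurable (c := 1) <| ae_of_all _ fun x => by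
      rw [Real.norm_of_nonneg (hη0 x)]
      exact hη1 x
  have h1ηℓi : Integrable (fun x => (1 - η x) * ℓp x) μ :=
    hℓi.bdd_mul (measurable_const.sub hη).aestronglyMeasurable (c := 1) <| ae_of_all _ fun x => by
      rw [Real.norm_of_nonneg (sub_nonneg.2 (hη1 x))]
      linarith [hη0 x]
  have h1η : ∫ x, (1 - η x) ∂μ = πm := by rw [integral_one_sub hηi, ← hπp, hπm]
  have hsℓ : ∫ p : X × X, s p.1 p.2 * ℓp p.1 ∂(μ.prod μ)
      = (∫ x, η x * ℓp x ∂μ) * πp + (∫ x, (1 - η x) * ℓp x ∂μ) * πm := by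
    rw [← h1η, hπp, ← integral_prod_mul_add_mul hηℓi h1ηℓi hηi h1ηi]
    congr 1 with p
    rw [hs]
    ring
  have h1sℓ : ∫ p : X × X, (1 - s p.1 p.2) * ℓp p.1 ∂(μ.prod μ)
      = (∫ x, η x * ℓp x ∂μ) * πm + (∫ x, (1 - η x) * ℓp x ∂μ) * πp := by
    rw [← h1η, hπp, ← integral_prod_mul_add_mul hηℓi h1ηℓi h1ηi hηi]
    congr 1 with p
    rw [hs]
    ring
  rw [hsℓ, h1sℓ, hπm]
  field_simp
  ring

/-- (Lemma A.2, Sconf identity.) -/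
theorem sconf_identity
    {X : Type*} [MeasurableSpace X] (μ : Measure X) [IsProbabilityMeasure μ]
    (η : X → ℝ) (hη : Measurable η) (hη0 : ∀ x, 0 ≤ η x) (hη1 : ∀ x, η x ≤ 1)
    (πp πm : ℝ) (hπp : πp = ∫ x, η x ∂μ) (hπm : πm = 1 - πp) (hπppos : 0 < πp)
    (s : X → X → ℝ)
    (hs : ∀ x x', s x x' = η x * η x' + (1 - η x) * (1 - η x'))
    (Cℓ : ℝ) (hCℓ : 0 ≤ Cℓ)
    (ℓp : X → ℝ) (hℓp : Measurable ℓp)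
    (hℓp0 : ∀ x, 0 ≤ ℓp x) (hℓpC : ∀ x, ℓp x ≤ Cℓ) :
    (∫ p : X × X, s p.1 p.2 * ℓp p.1 ∂(μ.prod μ))
      - (πm / πp) * ∫ p : X × X, (1 - s p.1 p.2) * ℓp p.1 ∂(μ.prod μ)
      = ((πp - πm) / πp) * ∫ x, η x * ℓp x ∂μ :=
  sconf_identity_general μ η hη hη0 hη1 πp πm hπp hπm hπppos s hs Cℓ ℓp hℓp hℓp0 hℓpC
end

section
/- (Lemma A.3, key identities for Theorem 2.) The following four identities hold, where all double integrals are over (x,x') with respect to μ⊗μ: (i) ∫∫ (2π₊(π₊ − c(x,x')) + π₋ − s(x,x'))·ℓ₊(x) = ∫ η(x)·ℓ₊(x) dμ(x); (ii) ∫∫ (2π₋(π₋ + c(x,x')) + π₊ − s(x,x'))·ℓ₋(x) = ∫ (1−η(x))·ℓ₋(x) dμ(x); (iii) ∫∫ (2π₊(π₊ + c(x,x')) + π₋ − s(x,x'))·ℓ₊(x') = ∫ η(x)·ℓ₊(x) dμ(x); (iv) ∫∫ (2π₋(π₋ − c(x,x')) + π₊ − s(x,x'))·ℓ₋(x') = ∫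 (1−η(x))·ℓ₋(x) dμ(x). -/
/-!
Integrating out `x'` first, the weight in (i) is affine in `η x'`, so its `x'`-average is obtained
by replacing `η x'` with `π₊`, and this collapses to `η x`; Fubini then gives (i). Identity (ii) is
(i) for the posterior `1 - η` of the other class (which fixes `s`, negates `c` and exchanges
`π₊`, `π₋`), and (iii), (iv) are (i), (ii) after exchanging the roles of `x` and `x'`.
-/

open MeasureTheory

section

variable {X : Type*}

def simConf (η : X → ℝ) (x x' : X) : ℝ := η x * η x' + (1 - η x) * (1 - η x')

def confDiff (η : X → ℝ) (x x' : X) : ℝ := η x' - η x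

/-- The weight of `ℓ₊(x)` in identity (i), with `π` in place of `π₊ = 1 - π₋`. -/
def pairWeight (η : X → ℝ) (π : ℝ) (x x' : X) : ℝ :=
  2 * π * (π - confDiff η x x') + (1 - π) - simConf η x x'

lemma pairWeight_swap (η : X → ℝ) (π : ℝ) (x x' : X) :
    pairWeight η π x' x = 2 * π * (π + confDiff η x x') + (1 - π) - simConf η x x' := by
  simp only [pairWeight, simConf, confDiff]
  ring

lemma pairWeight_one_sub (η : X → ℝ) (π : ℝ) (x x' : X) :
    pairWeight (fun y => 1 - η y) (1 - π) x x'
      = 2 * (1 - π) * ((1 - π) + confDiff η x x') + π - simConf η x x' := by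
  simp only [pairWeight, simConf, confDiff]
  ring

lemma pairWeight_one_sub_swap (η : X → ℝ) (π : ℝ) (x x' : X) :
    pairWeight (fun y => 1 - η y) (1 - π) x' x
      = 2 * (1 - π) * ((1 - π) - confDiff η x x') + π - simConf η x x' := by
  simp only [pairWeight, simConf, confDiff]
  ring

lemma abs_pairWeight_le {η : X → ℝ} (hη : ∀ x, η x ∈ Set.Icc (0 : ℝ) 1) {π : ℝ}
    (hπ : π ∈ Set.Icc (0 : ℝ) 1) (x x' : X) : |pairWeight η π x x'| ≤ 6 := by
  obtain ⟨ha0, ha1⟩ := hη x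
  obtain ⟨hb0, hb1⟩ := hη x'
  obtain ⟨hπ0, hπ1⟩ := hπ
  simp only [pairWeight, simConf, confDiff]
  rw [abs_le]
  constructor <;> nlinarith [mul_nonneg hπ0 ha0, mul_nonneg hπ0 hb0, mul_nonneg ha0 hb0,
    mul_nonneg (sub_nonneg.2 ha1) (sub_nonneg.2 hb1)]

variable [MeasurableSpace X] {μ : Measure X}

lemma integral_mem_Icc_of_mem_Icc [IsProbabilityMeasure μ] {f : X → ℝ}
    (hf : ∀ x, f x ∈ Set.Icc (0 : ℝ) 1) (hfi : Integrable f μ) :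
    ∫ x, f x ∂μ ∈ Set.Icc (0 : ℝ) 1 := by
  refine ⟨integral_nonneg fun x => (hf x).1, ?_⟩
  calc ∫ x, f x ∂μ ≤ ∫ _, (1 : ℝ) ∂μ := integral_mono hfi (integrable_const 1) fun x => (hf x).2
    _ = 1 := by simp

lemma integral_pairWeight_right [IsProbabilityMeasure μ] {η : X → ℝ} (hη : Integrable η μ)
    (x : X) : ∫ x', pairWeight η (∫ y, η y ∂μ) x x' ∂μ = η x := by
  set π := ∫ y, η y ∂μ
  have affine : ∀ x', pairWeight η π x x'
      = (2 * π ^ 2 + 2 * π * η x - π + η x) + (1 - 2 * π - 2 * η x) * η x' := by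
    intro x'
    simp only [pairWeight, simConf, confDiff]
    ring
  simp only [affine]
  rw [integral_add (integrable_const _) (hη.const_mul _), integral_const, integral_const_mul]
  simp only [probReal_univ, one_smul]
  ring

lemma integral_prod_mul_comp_fst {Y : Type*} [MeasurableSpace Y] {ν : Measure Y} [SFinite μ]
    [SFinite ν] {w : X × Y → ℝ} {ℓ : X → ℝ} (h : Integrable (fun p => w p * ℓ p.1) (μ.prod ν)) :
    ∫ p, w p * ℓ p.1 ∂μ.prod ν = ∫ x, (∫ y, w (x, y) ∂ν) * ℓ x ∂μ := by
  rw [integral_prod _ h]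
  simp only [integral_mul_const]

theorem integral_pairWeight_mul_fst [IsProbabilityMeasure μ] {η ℓ : X → ℝ} (hη : Measurable η)
    (hη01 : ∀ x, η x ∈ Set.Icc (0 : ℝ) 1) (hℓ : Integrable ℓ μ) :
    ∫ p, pairWeight η (∫ x, η x ∂μ) p.1 p.2 * ℓ p.1 ∂μ.prod μ = ∫ x, η x * ℓ x ∂μ := by
  have hηi : Integrable η μ :=
    .of_mem_Icc 0 1 hη.aemeasurable (Filter.Eventually.of_forall hη01)
  have hint : Integrable (fun p : X × X => pairWeight η (∫ x, η x ∂μ) p.1 p.2 * ℓ p.1)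
      (μ.prod μ) := by
    refine (hℓ.comp_fst μ).bdd_mul (c := 6) ?_ (Filter.Eventually.of_forall fun p =>
      abs_pairWeight_le hη01 (integral_mem_Icc_of_mem_Icc hη01 hηi) p.1 p.2)
    simp only [pairWeight, simConf, confDiff]
    fun_prop
  rw [integral_prod_mul_comp_fst hint]
  simp only [integral_pairWeight_right hηi]

end

theorem sconfconfdiff_key_identities_general
    {X : Type*} [MeasurableSpace X] (μ : Measure X) [IsProbabilityMeasure μ]
    (η : X → ℝ) (hη : Measurable η) (hη0 : ∀ x, 0 ≤ η x) (hη1 : ∀ x, η x ≤ 1)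
    (πp πm : ℝ) (hπp : πp = ∫ x, η x ∂μ) (hπm : πm = 1 - πp)
    (s c : X → X → ℝ)
    (hs : ∀ x x', s x x' = η x * η x' + (1 - η x) * (1 - η x'))
    (hc : ∀ x x', c x x' = η x' - η x)
    (Cℓ : ℝ)
    (ℓp ℓm : X → ℝ) (hℓp : Measurable ℓp) (hℓm : Measurable ℓm)
    (hℓp0 : ∀ x, 0 ≤ ℓp x) (hℓpC : ∀ x, ℓp x ≤ Cℓ)
    (hℓm0 : ∀ x, 0 ≤ ℓm x) (hℓmC : ∀ x, ℓm x ≤ Cℓ) :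
    (∫ p : X × X, (2 * πp * (πp - c p.1 p.2) + πm - s p.1 p.2) * ℓp p.1 ∂(μ.prod μ)
      = ∫ x, η x * ℓp x ∂μ) ∧
    (∫ p : X × X, (2 * πm * (πm + c p.1 p.2) + πp - s p.1 p.2) * ℓm p.1 ∂(μ.prod μ)
      = ∫ x, (1 - η x) * ℓm x ∂μ) ∧
    (∫ p : X × X, (2 * πp * (πp + c p.1 p.2) + πm - s p.1 p.2) * ℓp p.2 ∂(μ.prod μ)
      = ∫ x, η x * ℓp x ∂μ) ∧
    (∫ p : X × X, (2 * πm * (πm - c p.1 p.2) + πp - s p.1 p.2) * ℓm p.2 ∂(μ.prod μ)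
      = ∫ x, (1 - η x) * ℓm x ∂μ) := by
  obtain rfl : s = simConf η := funext fun x => funext (hs x)
  obtain rfl : c = confDiff η := funext fun x => funext (hc x)
  have hη01 (x : X) : η x ∈ Set.Icc (0 : ℝ) 1 := ⟨hη0 x, hη1 x⟩
  have hηi : Integrable η μ := .of_mem_Icc 0 1 hη.aemeasurable (Filter.Eventually.of_forall hη01)
  have hℓpi : Integrable ℓp μ :=
    .of_mem_Icc 0 Cℓ hℓp.aemeasurable (Filter.Eventually.of_forall fun x => ⟨hℓp0 x, hℓpC x⟩)
  have hℓmi : Integrable ℓm μ :=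
    .of_mem_Icc 0 Cℓ hℓm.aemeasurable (Filter.Eventually.of_forall fun x => ⟨hℓm0 x, hℓmC x⟩)
  have hp := integral_pairWeight_mul_fst hη hη01 hℓpi
  have hm := integral_pairWeight_mul_fst (hη.const_sub 1)
    (fun x => ⟨sub_nonneg.2 (hη1 x), sub_le_self 1 (hη0 x)⟩) hℓmi
  rw [integral_sub (integrable_const 1) hηi, integral_const, probReal_univ, one_smul] at hm
  subst hπm hπp
  refine ⟨hp, ?_, ?_, ?_⟩
  · simpa only [pairWeight_one_sub] using hm
  · simpa only [Prod.fst_swap, Prod.snd_swap, pairWeight_swap] using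
      (integral_prod_swap _).trans hp
  · simpa only [Prod.fst_swap, Prod.snd_swap, pairWeight_one_sub_swap] using
      (integral_prod_swap _).trans hm

/-- (Lemma A.3, key identities for Theorem 2.) -/
theorem sconfconfdiff_key_identities
    {X : Type*} [MeasurableSpace X] (μ : Measure X) [IsProbabilityMeasure μ]
    (η : X → ℝ) (hη : Measurable η) (hη0 : ∀ x, 0 ≤ η x) (hη1 : ∀ x, η x ≤ 1)
    (πp πm : ℝ) (hπp : πp = ∫ x, η x ∂μ) (hπm : πm = 1 - πp)
    (s c : X → X → ℝ)
    (hs : ∀ x x', s x x' = η x * η x' + (1 - η x) * (1 - η x'))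
    (hc : ∀ x x', c x x' = η x' - η x)
    (Cℓ : ℝ) (hCℓ : 0 ≤ Cℓ)
    (ℓp ℓm : X → ℝ) (hℓp : Measurable ℓp) (hℓm : Measurable ℓm)
    (hℓp0 : ∀ x, 0 ≤ ℓp x) (hℓpC : ∀ x, ℓp x ≤ Cℓ)
    (hℓm0 : ∀ x, 0 ≤ ℓm x) (hℓmC : ∀ x, ℓm x ≤ Cℓ) :
    (∫ p : X × X, (2 * πp * (πp - c p.1 p.2) + πm - s p.1 p.2) * ℓp p.1 ∂(μ.prod μ)
      = ∫ x, η x * ℓp x ∂μ) ∧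
    (∫ p : X × X, (2 * πm * (πm + c p.1 p.2) + πp - s p.1 p.2) * ℓm p.1 ∂(μ.prod μ)
      = ∫ x, (1 - η x) * ℓm x ∂μ) ∧
    (∫ p : X × X, (2 * πp * (πp + c p.1 p.2) + πm - s p.1 p.2) * ℓp p.2 ∂(μ.prod μ)
      = ∫ x, η x * ℓp x ∂μ) ∧
    (∫ p : X × X, (2 * πm * (πm - c p.1 p.2) + πp - s p.1 p.2) * ℓm p.2 ∂(μ.prod μ)
      = ∫ x, (1 - η x) * ℓm x ∂μ) :=
  sconfconfdiff_key_identities_general μ η hη hη0 hη1 πp πm hπp hπm s c hs hc Cℓ ℓp ℓm hℓp hℓm hℓp0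
    hℓpC hℓm0 hℓmC
end

section
/- (Population unbiasedness of the ConfDiff risk, Eq. (4).) It holds that ∫_{X×X} (1/2)·[ (π₊ − c(x,x'))·ℓ₊(x) + (π₋ − c(x,x'))·ℓ₋(x') + (π₊ + c(x,x'))·ℓ₊(x') + (π₋ + c(x,x'))·ℓ₋(x) ] d(μ⊗μ)(x,x') = R; i.e., the per-pair ConfDiff loss is an unbiased estimator of the classification risk. -/
/-!
Write the ConfDiff loss of a pair `(x, x')` as the average of `g (x, x')` and `g (x', x)`, where
`g (x, x') = (πp - c x x') ℓp x + (πm + c x x') ℓm x` only charges the first point. Since `μ ⊗ μ`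
is swap-invariant, the loss integrates to `∫ g`. As `g` is affine in `η x'`, integrating out `x'`
replaces `η x'` by `πp`, which turns `g` into the pointwise risk `η x ℓp x + (1 - η x) ℓm x`.
-/

open MeasureTheory

section

variable {α β E : Type*} [MeasurableSpace α] [MeasurableSpace β]
  [NormedAddCommGroup E] [NormedSpace ℝ E] {μ : Measure α} {ν : Measure β}

theorem integral_prod_self_symmetrize [SFinite μ] {f : α × α → E}
    (hf : Integrable f (μ.prod μ)) :
    ∫ z, (2 : ℝ)⁻¹ • (f z + f z.swap) ∂μ.prod μ = ∫ z, f z ∂μ.prod μ := by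
  have hf_swap : Integrable (fun z => f z.swap) (μ.prod μ) := hf.swap
  rw [integral_smul, integral_add hf hf_swap, integral_prod_swap, ← two_smul ℝ, smul_smul,
    inv_mul_cancel₀ two_ne_zero, one_smul]

theorem integral_prod_add_mul [SFinite μ] [IsProbabilityMeasure ν] {u v : α → ℝ} {w : β → ℝ}
    (hu : Integrable u μ) (hv : Integrable v μ) (hw : Integrable w ν) :
    ∫ z, (u z.1 + v z.1 * w z.2) ∂μ.prod ν = ∫ x, (u x + v x * ∫ y, w y ∂ν) ∂μ := by
  rw [integral_add (hu.comp_fst ν) (hv.mul_prod hw), integral_fun_fst, integral_prod_mul,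
    integral_add hu (hv.mul_const _), integral_mul_const, probReal_univ, one_smul]

theorem memLp_top_of_nonneg_of_le {f : α → ℝ} {C : ℝ} (hf : Measurable f) (h0 : ∀ x, 0 ≤ f x)
    (hC : ∀ x, f x ≤ C) : MemLp f ⊤ μ :=
  memLp_top_of_bound hf.aestronglyMeasurable C
    (.of_forall fun x => (Real.norm_of_nonneg (h0 x)).trans_le (hC x))

end

theorem confdiff_population_unbiased_general
    {X : Type*} [MeasurableSpace X] (μ : Measure X) [IsProbabilityMeasure μ]
    (η : X → ℝ) (hη : Measurable η) (hη0 : ∀ x, 0 ≤ η x) (hη1 : ∀ x, η x ≤ 1)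
    (πp πm : ℝ) (hπp : πp = ∫ x, η x ∂μ) (hπm : πm = 1 - πp)
    (c : X → X → ℝ) (hc : ∀ x x', c x x' = η x' - η x)
    (Cℓ : ℝ)
    (ℓp ℓm : X → ℝ) (hℓp : Measurable ℓp) (hℓm : Measurable ℓm)
    (hℓp0 : ∀ x, 0 ≤ ℓp x) (hℓpC : ∀ x, ℓp x ≤ Cℓ)
    (hℓm0 : ∀ x, 0 ≤ ℓm x) (hℓmC : ∀ x, ℓm x ≤ Cℓ)
    (R : ℝ) (hR : R = ∫ x, (η x * ℓp x + (1 - η x) * ℓm x) ∂μ) :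
    ∫ p : X × X, (1 / 2) *
      ((πp - c p.1 p.2) * ℓp p.1 + (πm - c p.1 p.2) * ℓm p.2
        + (πp + c p.1 p.2) * ℓp p.2 + (πm + c p.1 p.2) * ℓm p.1) ∂(μ.prod μ) = R := by
  have hηTop : MemLp η ⊤ μ := memLp_top_of_nonneg_of_le hη hη0 hη1
  have hℓpTop : MemLp ℓp ⊤ μ := memLp_top_of_nonneg_of_le hℓp hℓp0 hℓpC
  have hℓmTop : MemLp ℓm ⊤ μ := memLp_top_of_nonneg_of_le hℓm hℓm0 hℓmC
  set u : X → ℝ := fun x => (πp + η x) * ℓp x + (πm - η x) * ℓm x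
  set v : X → ℝ := fun x => ℓm x - ℓp x
  have hu : Integrable u μ :=
    ((hℓpTop.mul' ((memLp_top_const πp).add hηTop)).add
      (hℓmTop.mul' ((memLp_top_const πm).sub hηTop))).integrable le_top
  have hv : Integrable v μ := (hℓmTop.sub hℓpTop).integrable le_top
  have hηi : Integrable η μ := hηTop.integrable le_top
  let g : X × X → ℝ := fun z => u z.1 + v z.1 * η z.2
  calc _ = ∫ z, (2 : ℝ)⁻¹ • (g z + g z.swap) ∂μ.prod μ := by
          congr 1 with z
          simp only [g, u, v, hc, smul_eq_mul, Prod.fst_swap, Prod.snd_swap]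
          ring
    _ = ∫ x, (u x + v x * ∫ y, η y ∂μ) ∂μ :=
          (integral_prod_self_symmetrize ((hu.comp_fst μ).add (hv.mul_prod hηi))).trans
            (integral_prod_add_mul hu hv hηi)
    _ = R := by
          rw [hR, ← hπp]
          congr 1 with x
          simp only [u, v, hπm]
          ring

/-- (Population unbiasedness of the ConfDiff risk, Eq. (4).) -/
theorem confdiff_population_unbiased
    {X : Type*} [MeasurableSpace X] (μ : Measure X) [IsProbabilityMeasure μ]
    (η : X → ℝ) (hη : Measurable η) (hη0 : ∀ x, 0 ≤ η x) (hη1 : ∀ x, η x ≤ 1)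
    (πp πm : ℝ) (hπp : πp = ∫ x, η x ∂μ) (hπm : πm = 1 - πp)
    (c : X → X → ℝ) (hc : ∀ x x', c x x' = η x' - η x)
    (Cℓ : ℝ) (hCℓ : 0 ≤ Cℓ)
    (ℓp ℓm : X → ℝ) (hℓp : Measurable ℓp) (hℓm : Measurable ℓm)
    (hℓp0 : ∀ x, 0 ≤ ℓp x) (hℓpC : ∀ x, ℓp x ≤ Cℓ)
    (hℓm0 : ∀ x, 0 ≤ ℓm x) (hℓmC : ∀ x, ℓm x ≤ Cℓ)
    (R : ℝ) (hR : R = ∫ x, (η x * ℓp x + (1 - η x) * ℓm x) ∂μ) :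
    ∫ p : X × X, (1 / 2) *
      ((πp - c p.1 p.2) * ℓp p.1 + (πm - c p.1 p.2) * ℓm p.2
        + (πp + c p.1 p.2) * ℓp p.2 + (πm + c p.1 p.2) * ℓm p.1) ∂(μ.prod μ) = R :=
  confdiff_population_unbiased_general μ η hη hη0 hη1 πp πm hπp hπm c hc Cℓ ℓp ℓm hℓp hℓm hℓp0 hℓpC
    hℓm0 hℓmC R hR
end
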